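/- Let G be a vertex-color-avoiding connected graph on n vertices colored with exactly 2 colors. Then G contains a vertex-color-avoiding connected spanning subgraph with exactly n-1 edges; namely, the union of a spanning tree of the subgraph induced by the vertices of each of the two colors, together with one edge joining vertices of different colors. -/

import Mathlib

/-- The spanning subgraph obtained from `G` by removing all edges of color `c`. -/
def SimpleGraph.deleteColor {V C : Type*} (G : SimpleGraph V) (col : Sym2 V → C) (c : C) :
    SimpleGraph V :=
  G.deleteEdges {e | col e = c}

/-- An edge-colored graph is edge-color-avoiding connected if after removing the edges of any
single color it remains connected. -/
def EdgeColorAvoidingConnected {V C : Type*} (G : SimpleGraph V) (col : Sym2 V → C) : Prop :=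
  ∀ c : C, (G.deleteColor col c).Connected

/-- Vertices `u` and `v` are vertex-`c`-avoiding connected: there is a `u`-`v` walk, and either
one of `u`, `v` has color `c`, or some `u`-`v` walk contains no vertex of color `c`. -/
def VertexCAvoidingConnected {V C : Type*} (G : SimpleGraph V) (col : V → C) (c : C)
    (u v : V) : Prop :=
  G.Reachable u v ∧
    (col u = c ∨ col v = c ∨ ∃ p : G.Walk u v, ∀ w ∈ p.support, col w ≠ c)

/-- A vertex-colored graph is vertex-color-avoiding connected if any two vertices are
vertex-`c`-avoiding connected for every color `c`. -/
def VertexColorAvoidingConnected {V C : Type*} (G : SimpleGraph V) (col : V → C) : Prop :=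
  ∀ (c : C) (u v : V), VertexCAvoidingConnected G col c u v

/-- Vertices `u` and `v` are internally vertex-`c`-avoiding connected: there is a `u`-`v` walk
containing no internal vertices of color `c`. -/
def InternallyVertexCAvoidingConnected {V C : Type*} (G : SimpleGraph V) (col : V → C) (c : C)
    (u v : V) : Prop :=
  ∃ p : G.Walk u v, ∀ w ∈ p.support, w ≠ u → w ≠ v → col w ≠ c

/-- A vertex-colored graph is internally vertex-color-avoiding connected if any two vertices are
internally vertex-`c`-avoiding connected for every color `c`. -/
def InternallyVertexColorAvoidingConnected {V C : Type*} (G : SimpleGraph V) (col : V → C) :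
    Prop :=
  ∀ (c : C) (u v : V), InternallyVertexCAvoidingConnected G col c u v

/-! With two colours, a colouring is vertex-colour-avoiding connected exactly when the graph is
connected and each colour class induces a connected subgraph. Spanning trees of the two colour
classes together with one edge between them form a spanning tree of `G` that keeps both colour
classes connected, and a spanning tree has `n - 1` edges. -/

lemma Set.disjoint_sym2 {α : Type*} {s t : Set α} (h : Disjoint s t) :
    Disjoint s.sym2 t.sym2 := by
  rw [Set.disjoint_iff_inter_eq_empty, ← Set.sym2_inter, h.inter_eq, Set.sym2_empty]

namespace SimpleGraph

variable {V : Type*} {G : SimpleGraph V} {s : Set V}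

lemma reachable_induce_iff {u v : V} (hu : u ∈ s) (hv : v ∈ s) :
    (G.induce s).Reachable ⟨u, hu⟩ ⟨v, hv⟩ ↔
      ∃ p : G.Walk u v, ∀ w ∈ p.support, w ∈ s := by
  refine ⟨fun ⟨q⟩ => ⟨q.map (Embedding.induce s).toHom, fun w hw => ?_⟩,
    fun ⟨p, hp⟩ => ⟨p.induce s hp⟩⟩
  obtain ⟨w, -, rfl⟩ := List.mem_map.mp (Walk.support_map _ q ▸ hw)
  exact w.2

lemma preconnected_of_induce_of_induce_compl (hs : (G.induce s).Preconnected)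
    (hsc : (G.induce sᶜ).Preconnected) {x y : V} (hxy : G.Adj x y) (hx : x ∈ s) (hy : y ∉ s) :
    G.Preconnected := by
  have reachable_x (u : V) : G.Reachable u x := by
    by_cases hu : u ∈ s
    · exact (hs ⟨u, hu⟩ ⟨x, hx⟩).map (Embedding.induce s).toHom
    · exact ((hsc ⟨u, hu⟩ ⟨y, hy⟩).map (Embedding.induce sᶜ).toHom).trans
        hxy.symm.reachable
  exact fun u v => (reachable_x u).trans (reachable_x v).symm

lemma Preconnected.exists_adj_mem_not_mem (hG : G.Preconnected) {a b : V} (ha : a ∈ s)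
    (hb : b ∉ s) : ∃ x y, G.Adj x y ∧ x ∈ s ∧ y ∉ s := by
  obtain ⟨d, -, hd⟩ := (hG a b).some.exists_boundary_dart s ha hb
  exact ⟨d.fst, d.snd, d.adj, hd⟩

lemma edgeSet_map_subset_sym2_range {W : Type*} (f : V ↪ W) (H : SimpleGraph V) :
    (H.map f).edgeSet ⊆ (Set.range f).sym2 := by
  rw [edgeSet_map]
  rintro _ ⟨e, -, rfl⟩
  induction e using Sym2.ind
  simp

lemma ncard_edgeSet_map {W : Type*} (f : V ↪ W) (H : SimpleGraph V) :
    (H.map f).edgeSet.ncard = H.edgeSet.ncard := by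
  rw [edgeSet_map, Set.ncard_image_of_injective _ f.sym2Map.injective]

lemma IsTree.ncard_edgeSet_add_one [Finite V] (hG : G.IsTree) :
    G.edgeSet.ncard + 1 = Nat.card V :=
  (isTree_iff_connected_and_card.mp hG).2

theorem Preconnected.exists_isTree_le_connected_induce [Finite V] (hG : G.Preconnected)
    (hs : (G.induce s).Connected) (hsc : (G.induce sᶜ).Connected) :
    ∃ T ≤ G, T.IsTree ∧ (T.induce s).Connected ∧ (T.induce sᶜ).Connected := by
  obtain ⟨TA, hTA, hTA_tree⟩ := hs.exists_isTree_le
  obtain ⟨TB, hTB, hTB_tree⟩ := hsc.exists_isTree_le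
  obtain ⟨⟨a, ha⟩⟩ := hs.nonempty
  obtain ⟨⟨b, hb⟩⟩ := hsc.nonempty
  obtain ⟨x, y, hxy, hx, hy⟩ := hG.exists_adj_mem_not_mem ha hb
  set A := TA.map (Function.Embedding.subtype (· ∈ s))
  set B := TB.map (Function.Embedding.subtype (· ∈ sᶜ))
  set T := A ⊔ B ⊔ edge x y
  have hTs : (T.induce s).Connected :=
    hTA_tree.connected.mono <| (map_le_iff_le_comap _ _ _).mp (le_sup_left.trans le_sup_left)
  have hTsc : (T.induce sᶜ).Connected :=
    hTB_tree.connected.mono <| (map_le_iff_le_comap _ _ _).mp (le_sup_right.trans le_sup_left)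
  have hne : x ≠ y := ne_of_mem_of_not_mem hx hy
  have hT_adj : T.Adj x y :=
    (le_sup_right : edge x y ≤ T) ((edge_adj ..).mpr ⟨.inl ⟨rfl, rfl⟩, hne⟩)
  refine ⟨T, sup_le (sup_le ?_ ?_) ((edge_le_iff G).mpr (.inr hxy)), ?_, hTs, hTsc⟩
  · exact (map_le_iff_le_comap _ _ _).mpr hTA
  · exact (map_le_iff_le_comap _ _ _).mpr hTB
  have hT_conn : T.Connected := by
    have : Nonempty V := ⟨x⟩
    exact ⟨preconnected_of_induce_of_induce_compl hTs.preconnected hTsc.preconnected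
      hT_adj hx hy⟩
  refine isTree_iff_connected_and_card.mpr ⟨hT_conn, ?_⟩
  have hA : A.edgeSet ⊆ s.sym2 := by
    have := edgeSet_map_subset_sym2_range (Function.Embedding.subtype (· ∈ s)) TA
    rwa [Function.Embedding.coe_subtype, Subtype.range_coe] at this
  have hB : B.edgeSet ⊆ sᶜ.sym2 := by
    have := edgeSet_map_subset_sym2_range (Function.Embedding.subtype (· ∈ sᶜ)) TB
    rwa [Function.Embedding.coe_subtype, Subtype.range_coe] at this
  have hAB : Disjoint A.edgeSet B.edgeSet := (Set.disjoint_sym2 disjoint_compl_right).mono hA hB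
  have hxy_AB : s(x, y) ∉ A.edgeSet ∪ B.edgeSet := by
    rintro (h | h)
    · exact hy (hA h).2
    · exact (hB h).1 hx
  rw [Nat.card_coe_set_eq, edgeSet_sup, edgeSet_sup, edgeSet_edge_of_ne hne,
    Set.ncard_union_eq (Set.disjoint_singleton_right.mpr hxy_AB), Set.ncard_union_eq hAB,
    ncard_edgeSet_map, ncard_edgeSet_map, Set.ncard_singleton, ← Set.ncard_add_ncard_compl s,
    ← Nat.card_coe_set_eq s, ← Nat.card_coe_set_eq sᶜ, ← hTA_tree.ncard_edgeSet_add_one,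
    ← hTB_tree.ncard_edgeSet_add_one]
  ring

end SimpleGraph

open SimpleGraph

section ColorAvoiding

variable {V C : Type*} {G : SimpleGraph V} {col : V → C}

theorem vertexColorAvoidingConnected_iff :
    VertexColorAvoidingConnected G col ↔
      G.Preconnected ∧ ∀ c ∈ Set.range col, (G.induce {v | col v ≠ c}).Preconnected := by
  constructor
  · intro h
    refine ⟨fun u v => (h (col u) u v).1, ?_⟩
    rintro c - ⟨u, hu⟩ ⟨v, hv⟩
    rw [reachable_induce_iff]
    exact ((h c u v).2.resolve_left hu).resolve_left hv
  · rintro ⟨hG, hind⟩ c u v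
    refine ⟨hG u v, or_iff_not_imp_left.mpr fun hu => or_iff_not_imp_left.mpr fun hv => ?_⟩
    by_cases hc : c ∈ Set.range col
    · exact (reachable_induce_iff hu hv).mp (hind c hc ⟨u, hu⟩ ⟨v, hv⟩)
    · exact ⟨(hG u v).some, fun w _ hw => hc ⟨w, hw⟩⟩

end ColorAvoiding

/-- A vertex-color-avoiding connected graph `G` on `n` vertices colored with exactly 2 colors
contains a vertex-color-avoiding connected spanning subgraph with exactly `n - 1` edges. -/
theorem stmt18 {V C : Type*} [Fintype V] (G : SimpleGraph V) (col : V → C)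
    (hcols : (Set.range col).ncard = 2)
    (h : VertexColorAvoidingConnected G col) :
    ∃ G' : SimpleGraph V, G' ≤ G ∧ VertexColorAvoidingConnected G' col ∧
      G'.edgeSet.ncard = Fintype.card V - 1 := by
  obtain ⟨c₁, c₂, hc, hrange⟩ := Set.ncard_eq_two.mp hcols
  obtain ⟨hG, hind⟩ := vertexColorAvoidingConnected_iff.mp h
  have hcompl : {v | col v ≠ c₂}ᶜ = {v | col v ≠ c₁} := by
    ext v
    have hv : col v ∈ ({c₁, c₂} : Set C) := hrange ▸ Set.mem_range_self v
    grind
  obtain ⟨v₁, hv₁⟩ : c₁ ∈ Set.range col := by simp [hrange]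
  obtain ⟨v₂, hv₂⟩ : c₂ ∈ Set.range col := by simp [hrange]
  have hs : (G.induce {v | col v ≠ c₂}).Connected :=
    (connected_iff _).mpr ⟨hind c₂ (by simp [hrange]), ⟨⟨v₁, by simp [hv₁, hc]⟩⟩⟩
  have hsc : (G.induce {v | col v ≠ c₂}ᶜ).Connected := hcompl ▸
    (connected_iff _).mpr
      ⟨hind c₁ (by simp [hrange]), ⟨⟨v₂, by simp [hv₂, hc.symm]⟩⟩⟩
  obtain ⟨T, hTG, hT, hTs, hTsc⟩ := hG.exists_isTree_le_connected_induce hs hsc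
  refine ⟨T, hTG, vertexColorAvoidingConnected_iff.mpr ⟨hT.connected.preconnected, ?_⟩, ?_⟩
  · rw [hrange]
    rintro c (rfl | rfl)
    · exact (hcompl ▸ hTsc).preconnected
    · exact hTs.preconnected
  · have := hT.ncard_edgeSet_add_one
    rw [Nat.card_eq_fintype_card] at this
    omega
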